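/- Let τ be a complex number with Im τ > 0 and let x, y be complex numbers. Then c(x, y | τ) = q^{1/3} · a(x + πτ/3, y + πτ/3 | τ), where a and c are the cubic theta functions and q^{1/3} = e^{2πiτ/3}. -/
import Mathlib


open scoped BigOperators

/-- The cubic theta function a(x,y|τ) = ∑_{m,n∈ℤ} q^{m²+n²+mn} e^{2im(2x+y)+2in(x+2y)},
where q = e^{2πiτ}. -/
noncomputable def cubicA (x y τ : ℂ) : ℂ :=
  ∑' p : ℤ × ℤ,
    Complex.exp (2 * Real.pi * Complex.I * τ *
        ((p.1 : ℂ) ^ 2 + (p.2 : ℂ) ^ 2 + (p.1 : ℂ) * (p.2 : ℂ))) *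
      Complex.exp (2 * Complex.I * (p.1 : ℂ) * (2 * x + y) +
        2 * Complex.I * (p.2 : ℂ) * (x + 2 * y))

/-- The cubic theta function c(x,y|τ) = ∑_{m,n∈ℤ} q^{m²+n²+mn+m+n+1/3} e^{2im(2x+y)+2in(x+2y)},
where q^s = e^{2πiτs}. -/
noncomputable def cubicC (x y τ : ℂ) : ℂ :=
  ∑' p : ℤ × ℤ,
    Complex.exp (2 * Real.pi * Complex.I * τ *
        ((p.1 : ℂ) ^ 2 + (p.2 : ℂ) ^ 2 + (p.1 : ℂ) * (p.2 : ℂ) +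
          (p.1 : ℂ) + (p.2 : ℂ) + 1 / 3)) *
      Complex.exp (2 * Complex.I * (p.1 : ℂ) * (2 * x + y) +
        2 * Complex.I * (p.2 : ℂ) * (x + 2 * y))

theorem cubicC_eq_cubicA_shift (τ : ℂ) (hτ : 0 < τ.im) (x y : ℂ) :
    cubicC x y τ
    = Complex.exp (2 * Real.pi * Complex.I * τ / 3) *
        cubicA (x + Real.pi * τ / 3) (y + Real.pi * τ / 3) τ := by
  unfold cubicC cubicA
  rw [← tsum_mul_left]
  refine tsum_congr fun p => ?_
  rw [← mul_assoc, ← Complex.exp_add, ← Complex.exp_add, ← Complex.exp_add]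
  congr 1
  ring
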